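/- Under construction (H1), with S1 = V0·V1 and S2 = V0·V2 where V0 ~ Beta(1+α1,α2), V1,V2 ~ Beta(1,α1) independent, the correlation of S1 and S2 equals α2 / ((α1+1)(α1+α2)). -/

import Mathlib

open MeasureTheory ProbabilityTheory Real Filter

/-- The density of a Beta(a,b) random variable on (0,1). -/
noncomputable def betaPDFReal (a b x : ℝ) : ℝ :=
  if 0 < x ∧ x < 1 then
    (Real.Gamma (a + b) / (Real.Gamma a * Real.Gamma b)) * x ^ (a - 1) * (1 - x) ^ (b - 1)
  else 0

/-- The Beta(a,b) probability measure on ℝ. -/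
noncomputable def betaMeasure (a b : ℝ) : Measure ℝ :=
  MeasureTheory.volume.withDensity (fun x => ENNReal.ofReal (_root_.betaPDFReal a b x))

/-- `X` is a beta random variable with parameters `(a, b)` on `(Ω, μ)`. -/
def HasBetaLaw {Ω : Type*} [MeasurableSpace Ω] (μ : Measure Ω) (X : Ω → ℝ) (a b : ℝ) : Prop :=
  Measurable X ∧ μ.map X = _root_.betaMeasure a b

/-! Independence factorizes every moment of `S1 = V0 V1` and `S2 = V0 V2`:
`Cov(S1, S2) = Var(V0) (E V1)²` and `Var(Si) = E V0² E V1² - (E V0 E V1)²`. The Beta(a, b) moments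
`E Xⁿ = B(a + n, b) / B(a, b)` reduce, via `B(a + 1, b) = a / (a + b) B(a, b)`, to
`E X = a / (a + b)` and `E X² = a (a + 1) / ((a + b) (a + b + 1))`, and the quotient simplifies. -/

open scoped ENNReal NNReal
open Set

lemma integral_rpow_mul_one_sub_rpow {p q : ℝ} (hp : 0 < p) (hq : 0 < q) :
    ∫ x in (0:ℝ)..1, x ^ (p - 1) * (1 - x) ^ (q - 1) = beta p q := by
  have h : Complex.betaIntegral p q =
      ((∫ x in (0:ℝ)..1, x ^ (p - 1) * (1 - x) ^ (q - 1) : ℝ) : ℂ) := by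
    rw [Complex.betaIntegral, ← intervalIntegral.integral_ofReal]
    refine intervalIntegral.integral_congr fun x hx => ?_
    rw [uIcc_of_le zero_le_one] at hx
    push_cast
    rw [Complex.ofReal_cpow hx.1, Complex.ofReal_cpow (sub_nonneg.2 hx.2)]
    push_cast
    rfl
  rw [beta_eq_betaIntegralReal p q hp hq, h, Complex.ofReal_re]

lemma beta_add_one_left {a b : ℝ} (ha : a ≠ 0) (hab : a + b ≠ 0) :
    beta (a + 1) b = a / (a + b) * beta a b := by
  rw [beta, beta, add_right_comm, Real.Gamma_add_one ha, Real.Gamma_add_one hab]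
  simp only [div_eq_mul_inv, mul_inv]
  ring

lemma betaPDFReal_eq_indicator (a b : ℝ) :
    _root_.betaPDFReal a b =
      (Ioo 0 1).indicator fun x => (beta a b)⁻¹ * (x ^ (a - 1) * (1 - x) ^ (b - 1)) := by
  ext x
  simp only [_root_.betaPDFReal, indicator_apply, mem_Ioo, beta, inv_div, mul_assoc]

lemma integral_pow_betaMeasure {a b : ℝ} (ha : 0 < a) (hb : 0 < b) (n : ℕ) :
    ∫ x, x ^ n ∂(_root_.betaMeasure a b) = beta (a + n) b / beta a b := by
  have hmeas : Measurable fun x => (_root_.betaPDFReal a b x).toNNReal := by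
    rw [betaPDFReal_eq_indicator]
    exact (Measurable.indicator (by fun_prop) measurableSet_Ioo).real_toNNReal
  have hdensity : ∀ x : ℝ, (_root_.betaPDFReal a b x).toNNReal • x ^ n =
      (Ioo 0 1).indicator (fun x => (beta a b)⁻¹ * (x ^ (a + n - 1) * (1 - x) ^ (b - 1))) x := by
    intro x
    rw [betaPDFReal_eq_indicator, NNReal.smul_def, smul_eq_mul]
    by_cases hx : x ∈ Ioo 0 1
    · have hpos : 0 ≤ (beta a b)⁻¹ * (x ^ (a - 1) * (1 - x) ^ (b - 1)) := by
        have := beta_pos ha hb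
        have := Real.rpow_nonneg hx.1.le (a - 1)
        have := Real.rpow_nonneg (sub_nonneg.2 hx.2.le) (b - 1)
        positivity
      rw [indicator_of_mem hx, indicator_of_mem hx, Real.coe_toNNReal _ hpos,
        ← Real.rpow_natCast, add_sub_right_comm, Real.rpow_add hx.1]
      ring
    · simp [indicator_of_notMem hx]
  rw [show _root_.betaMeasure a b = volume.withDensity
      (fun x => ((_root_.betaPDFReal a b x).toNNReal : ℝ≥0∞)) from rfl,
    integral_withDensity_eq_integral_smul hmeas, integral_congr_ae (.of_forall hdensity),
    integral_indicator measurableSet_Ioo, ← integral_Ioc_eq_integral_Ioo,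
    ← intervalIntegral.integral_of_le zero_le_one, intervalIntegral.integral_const_mul,
    integral_rpow_mul_one_sub_rpow (by positivity) hb, inv_mul_eq_div]

section BetaLaw

variable {Ω : Type*} [MeasurableSpace Ω] {μ : Measure Ω} {X : Ω → ℝ} {a b : ℝ}

lemma HasBetaLaw.integral_pow (h : HasBetaLaw μ X a b) (n : ℕ) :
    ∫ ω, X ω ^ n ∂μ = ∫ x, x ^ n ∂(_root_.betaMeasure a b) := by
  rw [← h.2, integral_map h.1.aemeasurable (by fun_prop)]

lemma HasBetaLaw.integral_eq (h : HasBetaLaw μ X a b) (ha : 0 < a) (hb : 0 < b) :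
    ∫ ω, X ω ∂μ = a / (a + b) := by
  have hβ := (beta_pos ha hb).ne'
  have h1 := h.integral_pow 1
  rw [integral_pow_betaMeasure ha hb, Nat.cast_one, beta_add_one_left ha.ne' (by positivity),
    mul_div_assoc, div_self hβ, mul_one] at h1
  simpa using h1

lemma HasBetaLaw.integral_sq_eq (h : HasBetaLaw μ X a b) (ha : 0 < a) (hb : 0 < b) :
    ∫ ω, X ω ^ 2 ∂μ = a * (a + 1) / ((a + b) * (a + b + 1)) := by
  have hβ := (beta_pos ha hb).ne'
  rw [h.integral_pow, integral_pow_betaMeasure ha hb, Nat.cast_two, ← one_add_one_eq_two,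
    ← add_assoc, beta_add_one_left (by positivity) (by positivity),
    beta_add_one_left ha.ne' (by positivity), add_right_comm]
  field_simp

end BetaLaw

namespace ProbabilityTheory

variable {Ω : Type*} [MeasurableSpace Ω] {μ : Measure Ω} {X Y Z : Ω → ℝ}

lemma IndepFun.integral_mul_sq (h : IndepFun X Y μ) (hX : Measurable X) (hY : Measurable Y) :
    ∫ ω, (X ω * Y ω) ^ 2 ∂μ = (∫ ω, X ω ^ 2 ∂μ) * ∫ ω, Y ω ^ 2 ∂μ := by
  simp_rw [mul_pow]
  exact (h.comp (measurable_id.pow_const 2) (measurable_id.pow_const 2))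
    |>.integral_fun_mul_eq_mul_integral (by fun_prop) (by fun_prop)

lemma iIndepFun.integral_mul_mul_mul (h : iIndepFun ![X, Y, Z] μ) (hX : Measurable X)
    (hY : Measurable Y) (hZ : Measurable Z) :
    ∫ ω, X ω * Y ω * (X ω * Z ω) ∂μ = (∫ ω, X ω ^ 2 ∂μ) * (∫ ω, Y ω ∂μ) * ∫ ω, Z ω ∂μ := by
  have hmeas : ∀ i, Measurable (![X, Y, Z] i) := by
    intro i; fin_cases i <;> assumption
  have hX_YZ : IndepFun (fun ω => (Y ω, Z ω)) X μ :=
    h.indepFun_prodMk hmeas 1 2 0 (by decide) (by decide)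
  have hYZ : IndepFun Y Z μ := h.indepFun (show (1 : Fin 3) ≠ 2 by decide)
  calc ∫ ω, X ω * Y ω * (X ω * Z ω) ∂μ = ∫ ω, X ω ^ 2 * (Y ω * Z ω) ∂μ := by
        congr with ω; ring
    _ = (∫ ω, X ω ^ 2 ∂μ) * ∫ ω, Y ω * Z ω ∂μ :=
        (hX_YZ.symm.comp (measurable_id.pow_const 2) (measurable_fst.mul measurable_snd))
          |>.integral_fun_mul_eq_mul_integral (by fun_prop) (by fun_prop)
    _ = _ := by
        rw [hYZ.integral_fun_mul_eq_mul_integral hY.aestronglyMeasurable hZ.aestronglyMeasurable,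
          mul_assoc]

end ProbabilityTheory

theorem correlation_H1_general {Ω : Type*} [MeasurableSpace Ω] (μ : Measure Ω)
    (V0 V1 V2 : Ω → ℝ) (α1 α2 : ℝ) (hα1 : 0 < α1) (hα2 : 0 < α2)
    (h0 : HasBetaLaw μ V0 (1 + α1) α2) (h1 : HasBetaLaw μ V1 1 α1) (h2 : HasBetaLaw μ V2 1 α1)
    (hind : iIndepFun ![V0, V1, V2] μ)
    (S1 S2 : Ω → ℝ) (hS1 : S1 = fun ω => V0 ω * V1 ω) (hS2 : S2 = fun ω => V0 ω * V2 ω) :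
    ((∫ ω, S1 ω * S2 ω ∂μ) - (∫ ω, S1 ω ∂μ) * (∫ ω, S2 ω ∂μ)) /
        (Real.sqrt ((∫ ω, S1 ω ^ 2 ∂μ) - (∫ ω, S1 ω ∂μ) ^ 2) *
          Real.sqrt ((∫ ω, S2 ω ^ 2 ∂μ) - (∫ ω, S2 ω ∂μ) ^ 2)) =
      α2 / ((α1 + 1) * (α1 + α2)) := by
  subst hS1 hS2
  beta_reduce
  have h01 : IndepFun V0 V1 μ := hind.indepFun (show (0 : Fin 3) ≠ 1 by decide)
  have h02 : IndepFun V0 V2 μ := hind.indepFun (show (0 : Fin 3) ≠ 2 by decide)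
  rw [hind.integral_mul_mul_mul h0.1 h1.1 h2.1,
    h01.integral_mul_sq h0.1 h1.1, h02.integral_mul_sq h0.1 h2.1,
    h01.integral_fun_mul_eq_mul_integral h0.1.aestronglyMeasurable h1.1.aestronglyMeasurable,
    h02.integral_fun_mul_eq_mul_integral h0.1.aestronglyMeasurable h2.1.aestronglyMeasurable,
    h0.integral_eq (by positivity) hα2, h0.integral_sq_eq (by positivity) hα2,
    h1.integral_eq one_pos hα1, h1.integral_sq_eq one_pos hα1,
    h2.integral_eq one_pos hα1, h2.integral_sq_eq one_pos hα1]
  have hvar : (1 + α1) * (1 + α1 + 1) / ((1 + α1 + α2) * (1 + α1 + α2 + 1)) *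
      (1 * (1 + 1) / ((1 + α1) * (1 + α1 + 1))) - ((1 + α1) / (1 + α1 + α2) * (1 / (1 + α1))) ^ 2
      = (α1 + α2) / ((1 + α1 + α2) ^ 2 * (2 + α1 + α2)) := by
    field_simp
    ring
  rw [hvar, Real.mul_self_sqrt (by positivity)]
  field_simp
  ring

theorem correlation_H1 {Ω : Type*} [MeasurableSpace Ω] (μ : Measure Ω)
    [IsProbabilityMeasure μ] (V0 V1 V2 : Ω → ℝ) (α1 α2 : ℝ) (hα1 : 0 < α1) (hα2 : 0 < α2)
    (h0 : HasBetaLaw μ V0 (1 + α1) α2) (h1 : HasBetaLaw μ V1 1 α1) (h2 : HasBetaLaw μ V2 1 α1)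
    (hind : iIndepFun ![V0, V1, V2] μ)
    (S1 S2 : Ω → ℝ) (hS1 : S1 = fun ω => V0 ω * V1 ω) (hS2 : S2 = fun ω => V0 ω * V2 ω) :
    ((∫ ω, S1 ω * S2 ω ∂μ) - (∫ ω, S1 ω ∂μ) * (∫ ω, S2 ω ∂μ)) /
        (Real.sqrt ((∫ ω, S1 ω ^ 2 ∂μ) - (∫ ω, S1 ω ∂μ) ^ 2) *
          Real.sqrt ((∫ ω, S2 ω ^ 2 ∂μ) - (∫ ω, S2 ω ∂μ) ^ 2)) =
      α2 / ((α1 + 1) * (α1 + α2)) :=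
  correlation_H1_general μ V0 V1 V2 α1 α2 hα1 hα2 h0 h1 h2 hind S1 S2 hS1 hS2
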